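/- arXiv:2010.11293 — 2 statements merged into one kernel-verified Lean document; each statement's English description precedes it below -/
import Mathlib

section
/- (Snake lemma) Let E be a deflation-exact category satisfying axiom (R3+). Consider a commutative diagram with rows A₁ →φ₁ A₂ →φ₂ A₃ ↠ 0 and 0 ↣ B₁ →φ₁' B₂ →φ₂' B₃, where the rows are exact sequences of admissible morphisms and the vertical morphisms f₁ : A₁ → B₁, f₂ : A₂ → B₂, f₃ : A₃ → B₃ are admissible. Write Kᵢ = ker(fᵢ) and Cᵢ = coker(fᵢ). Then there is an induced exact sequence ker(φ₁) ↣ K₁ → K₂ → K₃ → C₁ → C₂ → C₃ ↠ coker(φ₂'), whose first morphism is an inflation and whose last morphism is a deflation. -/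
set_option linter.unusedSectionVars false


open CategoryTheory CategoryTheory.Limits ZeroObject

attribute [local instance] CategoryTheory.Limits.hasBinaryBiproducts_of_finite_biproducts

universe v u

section Preamble

variable {C : Type u} [Category.{v} C] [Preadditive C] [HasZeroObject C]
  [HasFiniteBiproducts C]

/-- `(f, g)` is a kernel-cokernel pair: `f` is a kernel of `g` and `g` is a cokernel of `f`. -/
structure IsKernelCokernelPair {X Y Z : C} (f : X ⟶ Y) (g : Y ⟶ Z) : Prop where
  comp_zero : f ≫ g = 0
  isKernel : Nonempty (IsLimit (KernelFork.ofι f comp_zero))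
  isCokernel : Nonempty (IsColimit (CokernelCofork.ofπ g comp_zero))

/-- `k` is a kernel of `g`. -/
def IsKernelOf {K Y Z : C} (k : K ⟶ Y) (g : Y ⟶ Z) : Prop :=
  ∃ w : k ≫ g = 0, Nonempty (IsLimit (KernelFork.ofι k w))

/-- `c` is a cokernel of `f`. -/
def IsCokernelOf {X Y Q : C} (c : Y ⟶ Q) (f : X ⟶ Y) : Prop :=
  ∃ w : f ≫ c = 0, Nonempty (IsColimit (CokernelCofork.ofπ c w))

/-- All pullbacks along `g` exist. -/
def HasAllPullbacksAlong {Y Z : C} (g : Y ⟶ Z) : Prop :=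
  ∀ ⦃W : C⦄ (h : W ⟶ Z), ∃ (P : C) (p₁ : P ⟶ Y) (p₂ : P ⟶ W), IsPullback p₁ p₂ g h

/-- An additive category is weakly idempotent complete if every retraction has a kernel. -/
def WeaklyIdempotentComplete (C : Type u) [Category.{v} C] [Preadditive C]
    [HasZeroObject C] [HasFiniteBiproducts C] : Prop :=
  ∀ ⦃X Y : C⦄ (r : X ⟶ Y), (∃ s : Y ⟶ X, s ≫ r = 𝟙 Y) → HasKernel r

end Preamble

/-- A conflation structure on an additive category: a class of kernel-cokernel pairs
closed under isomorphisms.  The first morphism of a conflation is called an inflation,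
the second a deflation. -/
structure ConflationStruct (C : Type u) [Category.{v} C] [Preadditive C]
    [HasZeroObject C] [HasFiniteBiproducts C] where
  IsConflation : ∀ ⦃X Y Z : C⦄, (X ⟶ Y) → (Y ⟶ Z) → Prop
  kernelCokernel : ∀ ⦃X Y Z : C⦄ ⦃f : X ⟶ Y⦄ ⦃g : Y ⟶ Z⦄,
    IsConflation f g → IsKernelCokernelPair f g
  iso_closed : ∀ ⦃X Y Z X' Y' Z' : C⦄ ⦃f : X ⟶ Y⦄ ⦃g : Y ⟶ Z⦄ ⦃f' : X' ⟶ Y'⦄ ⦃g' : Y' ⟶ Z'⦄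
    (eX : X ≅ X') (eY : Y ≅ Y') (eZ : Z ≅ Z'),
    f ≫ eY.hom = eX.hom ≫ f' → g ≫ eZ.hom = eY.hom ≫ g' →
    IsConflation f g → IsConflation f' g'

namespace ConflationStruct

variable {C : Type u} [Category.{v} C] [Preadditive C] [HasZeroObject C]
  [HasFiniteBiproducts C] (S : ConflationStruct C)

/-- A morphism is an inflation if it is the first morphism of some conflation. -/
def IsInflation {X Y : C} (f : X ⟶ Y) : Prop := ∃ (Z : C) (g : Y ⟶ Z), S.IsConflation f g

/-- A morphism is a deflation if it is the second morphism of some conflation. -/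
def IsDeflation {Y Z : C} (g : Y ⟶ Z) : Prop := ∃ (X : C) (f : X ⟶ Y), S.IsConflation f g

/-- A deflation-exact category: axioms (R0), (R1), (R2). -/
structure IsDeflationExact : Prop where
  R0 : S.IsDeflation (𝟙 (0 : C))
  R1 : ∀ ⦃X Y Z : C⦄ ⦃g : X ⟶ Y⦄ ⦃h : Y ⟶ Z⦄,
    S.IsDeflation g → S.IsDeflation h → S.IsDeflation (g ≫ h)
  R2 : ∀ ⦃Y Z : C⦄ ⦃g : Y ⟶ Z⦄, S.IsDeflation g → ∀ ⦃W : C⦄ (h : W ⟶ Z),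
    ∃ (P : C) (p₁ : P ⟶ Y) (p₂ : P ⟶ W), IsPullback p₁ p₂ g h ∧ S.IsDeflation p₂

/-- An inflation-exact category: axioms (L0), (L1), (L2). -/
structure IsInflationExact : Prop where
  L0 : S.IsInflation (𝟙 (0 : C))
  L1 : ∀ ⦃X Y Z : C⦄ ⦃f : X ⟶ Y⦄ ⦃g : Y ⟶ Z⦄,
    S.IsInflation f → S.IsInflation g → S.IsInflation (f ≫ g)
  L2 : ∀ ⦃X Y : C⦄ ⦃f : X ⟶ Y⦄, S.IsInflation f → ∀ ⦃W : C⦄ (h : X ⟶ W),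
    ∃ (Q : C) (q₁ : Y ⟶ Q) (q₂ : W ⟶ Q), IsPushout f h q₁ q₂ ∧ S.IsInflation q₂

/-- Axiom (R0*): for every object `A`, the morphism `A ⟶ 0` is a deflation. -/
def AxiomR0star : Prop := ∀ A : C, S.IsDeflation (0 : A ⟶ (0 : C))

/-- Axiom (R3), the obscure axiom: if `p` has a kernel and `i ≫ p` is a deflation,
then `p` is a deflation. -/
def AxiomR3 : Prop := ∀ ⦃A B Q : C⦄ (i : A ⟶ B) (p : B ⟶ Q),
  HasKernel p → S.IsDeflation (i ≫ p) → S.IsDeflation p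

/-- Axiom (R3−): if `f ≫ g` is a deflation and all pullbacks along `g` exist,
then `g` is a deflation. -/
def AxiomR3minus : Prop := ∀ ⦃X Y Z : C⦄ (f : X ⟶ Y) (g : Y ⟶ Z),
  S.IsDeflation (f ≫ g) → HasAllPullbacksAlong g → S.IsDeflation g

/-- Axiom (R3+): if `f ≫ g` is a deflation, then `g` is a deflation. -/
def AxiomR3plus : Prop := ∀ ⦃X Y Z : C⦄ (f : X ⟶ Y) (g : Y ⟶ Z),
  S.IsDeflation (f ≫ g) → S.IsDeflation g

/-- A morphism is admissible if it factors as a deflation followed by an inflation. -/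
def IsAdmissible {X Y : C} (f : X ⟶ Y) : Prop :=
  ∃ (I : C) (e : X ⟶ I) (m : I ⟶ Y), S.IsDeflation e ∧ S.IsInflation m ∧ e ≫ m = f

/-- Exactness of a pair of composable admissible morphisms at the middle object:
the inflation (image) part of `f` is a kernel of `g`, and the deflation (coimage)
part of `g` is a cokernel of `f`. -/
def ExactAt {X Y Z : C} (f : X ⟶ Y) (g : Y ⟶ Z) : Prop :=
  (∃ (I : C) (e : X ⟶ I) (m : I ⟶ Y),
    S.IsDeflation e ∧ S.IsInflation m ∧ e ≫ m = f ∧ IsKernelOf m g) ∧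
  (∃ (J : C) (e' : Y ⟶ J) (m' : J ⟶ Z),
    S.IsDeflation e' ∧ S.IsInflation m' ∧ e' ≫ m' = g ∧ IsCokernelOf e' f)

/-- A `P`-deflation: (P1) all pullbacks along `f` exist, and (P2) there is a morphism
`h` such that `h ≫ f` is a deflation. -/
def IsPDeflation {X Y : C} (f : X ⟶ Y) : Prop :=
  HasAllPullbacksAlong f ∧ ∃ (W : C) (h : W ⟶ X), S.IsDeflation (h ≫ f)

end ConflationStruct

section SnakeHelpers

variable {C : Type u} [Category.{v} C] [Preadditive C] [HasZeroObject C]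
  [HasFiniteBiproducts C]

theorem IsKernelOf.comp_eq_zero {K Y Z : C} {k : K ⟶ Y} {g : Y ⟶ Z}
    (h : IsKernelOf k g) : k ≫ g = 0 := h.choose

theorem IsKernelOf.lift' {K Y Z : C} {k : K ⟶ Y} {g : Y ⟶ Z} (h : IsKernelOf k g)
    {T : C} (t : T ⟶ Y) (ht : t ≫ g = 0) : ∃ s : T ⟶ K, s ≫ k = t := by
  obtain ⟨w, ⟨hl⟩⟩ := h
  obtain ⟨l, hl'⟩ := KernelFork.IsLimit.lift' hl t ht
  exact ⟨l, by simpa using hl'⟩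

theorem IsKernelOf.cancel {K Y Z : C} {k : K ⟶ Y} {g : Y ⟶ Z} (h : IsKernelOf k g)
    {T : C} {u v : T ⟶ K} (huv : u ≫ k = v ≫ k) : u = v := by
  obtain ⟨w, ⟨hl⟩⟩ := h
  exact Fork.IsLimit.hom_ext hl (by simpa using huv)

theorem isKernelOf_mk {K Y Z : C} {k : K ⟶ Y} {g : Y ⟶ Z} (w : k ≫ g = 0)
    (cancel : ∀ {T : C} (u v : T ⟶ K), u ≫ k = v ≫ k → u = v)
    (fac : ∀ {T : C} (t : T ⟶ Y), t ≫ g = 0 → ∃ s : T ⟶ K, s ≫ k = t) :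
    IsKernelOf k g :=
  ⟨w, ⟨KernelFork.IsLimit.ofι k w (fun t ht => (fac t ht).choose)
      (fun t ht => (fac t ht).choose_spec)
      (fun t ht m hm => cancel _ _ (by rw [hm, (fac t ht).choose_spec]))⟩⟩

theorem IsCokernelOf.comp_eq_zero {X Y Q : C} {c : Y ⟶ Q} {f : X ⟶ Y}
    (h : IsCokernelOf c f) : f ≫ c = 0 := h.choose

theorem IsCokernelOf.desc' {X Y Q : C} {c : Y ⟶ Q} {f : X ⟶ Y} (h : IsCokernelOf c f)
    {T : C} (t : Y ⟶ T) (ht : f ≫ t = 0) : ∃ s : Q ⟶ T, c ≫ s = t := by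
  obtain ⟨w, ⟨hl⟩⟩ := h
  obtain ⟨l, hl'⟩ := CokernelCofork.IsColimit.desc' hl t ht
  exact ⟨l, by simpa using hl'⟩

theorem IsCokernelOf.cancel {X Y Q : C} {c : Y ⟶ Q} {f : X ⟶ Y} (h : IsCokernelOf c f)
    {T : C} {u v : Q ⟶ T} (huv : c ≫ u = c ≫ v) : u = v := by
  obtain ⟨w, ⟨hl⟩⟩ := h
  exact Cofork.IsColimit.hom_ext hl (by simpa using huv)

theorem isCokernelOf_mk {X Y Q : C} {c : Y ⟶ Q} {f : X ⟶ Y} (w : f ≫ c = 0)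
    (cancel : ∀ {T : C} (u v : Q ⟶ T), c ≫ u = c ≫ v → u = v)
    (fac : ∀ {T : C} (t : Y ⟶ T), f ≫ t = 0 → ∃ s : Q ⟶ T, c ≫ s = t) :
    IsCokernelOf c f :=
  ⟨w, ⟨CokernelCofork.IsColimit.ofπ c w (fun t ht => (fac t ht).choose)
      (fun t ht => (fac t ht).choose_spec)
      (fun t ht m hm => cancel _ _ (by rw [hm, (fac t ht).choose_spec]))⟩⟩

theorem IsKernelOf.comp_mono {K Y Z Z' : C} {k : K ⟶ Y} {g : Y ⟶ Z}
    (h : IsKernelOf k g) {m : Z ⟶ Z'}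
    (hm : ∀ {T : C} (u v : T ⟶ Z), u ≫ m = v ≫ m → u = v) :
    IsKernelOf k (g ≫ m) := by
  refine isKernelOf_mk ?_ (fun u v huv => h.cancel huv) (fun t ht => h.lift' t ?_)
  · rw [← Category.assoc, h.comp_eq_zero, zero_comp]
  · exact hm _ _ (by rw [Category.assoc, ht, zero_comp])

theorem IsCokernelOf.epi_comp {X X' Y Q : C} {c : Y ⟶ Q} {f : X ⟶ Y}
    (h : IsCokernelOf c f) {e : X' ⟶ X}
    (he : ∀ {T : C} (u v : X ⟶ T), e ≫ u = e ≫ v → u = v) :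
    IsCokernelOf c (e ≫ f) := by
  refine isCokernelOf_mk ?_ (fun u v huv => h.cancel huv) (fun t ht => h.desc' t ?_)
  · rw [Category.assoc, h.comp_eq_zero, comp_zero]
  · exact he _ _ (by rw [← Category.assoc, ht, comp_zero])

theorem IsKernelOf.isIso_of_zero {K Y Z : C} {k : K ⟶ Y} {g : Y ⟶ Z}
    (h : IsKernelOf k g) (hg : g = 0) : IsIso k := by
  obtain ⟨s, hs⟩ := h.lift' (𝟙 Y) (by rw [hg, comp_zero])
  exact ⟨s, h.cancel (by rw [Category.assoc, hs, Category.comp_id, Category.id_comp]), hs⟩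

theorem IsCokernelOf.isIso_of_zero {X Y Q : C} {c : Y ⟶ Q} {f : X ⟶ Y}
    (h : IsCokernelOf c f) (hf : f = 0) : IsIso c := by
  obtain ⟨s, hs⟩ := h.desc' (𝟙 Y) (by rw [hf, zero_comp])
  exact ⟨s, hs, h.cancel (by rw [← Category.assoc, hs, Category.comp_id, Category.id_comp])⟩

theorem isKernelOf_id_of_zero {X Z : C} : IsKernelOf (𝟙 X) (0 : X ⟶ Z) :=
  isKernelOf_mk comp_zero
    (fun u v huv => by simpa using huv) (fun t _ => ⟨t, Category.comp_id t⟩)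

theorem isPullback_mk {P X Y Z : C} {fst : P ⟶ X} {snd : P ⟶ Y} {f : X ⟶ Z} {g : Y ⟶ Z}
    (w : fst ≫ f = snd ≫ g)
    (lift : ∀ {T : C} (a : T ⟶ X) (b : T ⟶ Y), a ≫ f = b ≫ g →
      ∃ t : T ⟶ P, t ≫ fst = a ∧ t ≫ snd = b)
    (cancel : ∀ {T : C} (u v : T ⟶ P),
      u ≫ fst = v ≫ fst → u ≫ snd = v ≫ snd → u = v) :
    IsPullback fst snd f g :=
  IsPullback.of_isLimit (PullbackCone.IsLimit.mk w
    (fun s => (lift s.fst s.snd s.condition).choose)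
    (fun s => (lift s.fst s.snd s.condition).choose_spec.1)
    (fun s => (lift s.fst s.snd s.condition).choose_spec.2)
    (fun s m hm1 hm2 => cancel _ _
      (by rw [hm1, (lift s.fst s.snd s.condition).choose_spec.1])
      (by rw [hm2, (lift s.fst s.snd s.condition).choose_spec.2])))

theorem isPullback_hom_ext {P X Y Z : C} {fst : P ⟶ X} {snd : P ⟶ Y} {f : X ⟶ Z} {g : Y ⟶ Z}
    (h : IsPullback fst snd f g) {W : C} {a b : W ⟶ P}
    (h1 : a ≫ fst = b ≫ fst) (h2 : a ≫ snd = b ≫ snd) : a = b :=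
  PullbackCone.IsLimit.hom_ext h.isLimit
    (by rwa [h.cone_fst]) (by rwa [h.cone_snd])

namespace ConflationStruct

variable {S : ConflationStruct C}

theorem IsConflation.zero {X Y Z : C} {f : X ⟶ Y} {g : Y ⟶ Z}
    (h : S.IsConflation f g) : f ≫ g = 0 := (S.kernelCokernel h).comp_zero

theorem IsConflation.isKernelOf {X Y Z : C} {f : X ⟶ Y} {g : Y ⟶ Z}
    (h : S.IsConflation f g) : IsKernelOf f g :=
  ⟨(S.kernelCokernel h).comp_zero, (S.kernelCokernel h).isKernel⟩

theorem IsConflation.isCokernelOf {X Y Z : C} {f : X ⟶ Y} {g : Y ⟶ Z}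
    (h : S.IsConflation f g) : IsCokernelOf g f :=
  ⟨(S.kernelCokernel h).comp_zero, (S.kernelCokernel h).isCokernel⟩

theorem IsDeflation.cancel {Y Z : C} {g : Y ⟶ Z} (h : S.IsDeflation g)
    {T : C} {u v : Z ⟶ T} (huv : g ≫ u = g ≫ v) : u = v := by
  obtain ⟨X, f, hc⟩ := h
  exact hc.isCokernelOf.cancel huv

theorem IsInflation.cancel {X Y : C} {f : X ⟶ Y} (h : S.IsInflation f)
    {T : C} {u v : T ⟶ X} (huv : u ≫ f = v ≫ f) : u = v := by
  obtain ⟨Z, g, hc⟩ := h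
  exact hc.isKernelOf.cancel huv

theorem conflation_of_isKernelOf {K Y Z : C} {k : K ⟶ Y} {g : Y ⟶ Z}
    (hg : S.IsDeflation g) (hk : IsKernelOf k g) : S.IsConflation k g := by
  obtain ⟨X, f, hc⟩ := hg
  obtain ⟨a, ha⟩ := hk.lift' f hc.isKernelOf.comp_eq_zero
  obtain ⟨b, hb⟩ := hc.isKernelOf.lift' k hk.comp_eq_zero
  have hab : a ≫ b = 𝟙 X :=
    hc.isKernelOf.cancel (by rw [Category.assoc, hb, ha, Category.id_comp])
  have hba : b ≫ a = 𝟙 K :=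
    hk.cancel (by rw [Category.assoc, ha, hb, Category.id_comp])
  exact S.iso_closed ⟨a, b, hab, hba⟩ (Iso.refl Y) (Iso.refl Z)
    (by simp [ha]) (by simp) hc

theorem conflation_of_isCokernelOf {X Y Q : C} {f : X ⟶ Y} {c : Y ⟶ Q}
    (hf : S.IsInflation f) (hc : IsCokernelOf c f) : S.IsConflation f c := by
  obtain ⟨Z, g, hg⟩ := hf
  obtain ⟨a, ha⟩ := hg.isCokernelOf.desc' c hc.comp_eq_zero
  obtain ⟨b, hb⟩ := hc.desc' g hg.isCokernelOf.comp_eq_zero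
  have hab : a ≫ b = 𝟙 Z :=
    hg.isCokernelOf.cancel (by rw [← Category.assoc, ha, hb, Category.comp_id])
  have hba : b ≫ a = 𝟙 Q :=
    hc.cancel (by rw [← Category.assoc, hb, ha, Category.comp_id])
  exact S.iso_closed (Iso.refl X) (Iso.refl Y) ⟨a, b, hab, hba⟩
    (by simp) (by simp [ha]) hg

theorem IsDeflation.comp_iso {Y Z Z' : C} {g : Y ⟶ Z} (h : S.IsDeflation g)
    (i : Z ≅ Z') : S.IsDeflation (g ≫ i.hom) := by
  obtain ⟨X, f, hc⟩ := h
  exact ⟨X, f, S.iso_closed (Iso.refl X) (Iso.refl Y) i (by simp) (by simp) hc⟩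

theorem IsDeflation.iso_comp {Y Y' Z : C} {g : Y ⟶ Z} (h : S.IsDeflation g)
    (i : Y' ≅ Y) : S.IsDeflation (i.hom ≫ g) := by
  obtain ⟨X, f, hc⟩ := h
  exact ⟨X, f ≫ i.inv, S.iso_closed (Iso.refl X) i.symm (Iso.refl Z)
    (by simp) (by simp) hc⟩

theorem IsInflation.iso_comp {X X' Y : C} {f : X ⟶ Y} (h : S.IsInflation f)
    (i : X' ≅ X) : S.IsInflation (i.hom ≫ f) := by
  obtain ⟨Z, g, hc⟩ := h
  exact ⟨Z, g, S.iso_closed i.symm (Iso.refl Y) (Iso.refl Z) (by simp) (by simp) hc⟩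

theorem isDeflation_of_isPullback (hDE : S.IsDeflationExact)
    {P Y W Z : C} {p₁ : P ⟶ Y} {p₂ : P ⟶ W} {g : Y ⟶ Z} {h : W ⟶ Z}
    (hg : S.IsDeflation g) (hpb : IsPullback p₁ p₂ g h) : S.IsDeflation p₂ := by
  obtain ⟨P₀, q₁, q₂, hpb₀, hq₂⟩ := hDE.R2 hg h
  obtain ⟨a, ha1, ha2⟩ : ∃ a : P ⟶ P₀, a ≫ q₁ = p₁ ∧ a ≫ q₂ = p₂ :=
    ⟨hpb₀.lift p₁ p₂ hpb.w, hpb₀.lift_fst _ _ _, hpb₀.lift_snd _ _ _⟩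
  obtain ⟨b, hb1, hb2⟩ : ∃ b : P₀ ⟶ P, b ≫ p₁ = q₁ ∧ b ≫ p₂ = q₂ :=
    ⟨hpb.lift q₁ q₂ hpb₀.w, hpb.lift_fst _ _ _, hpb.lift_snd _ _ _⟩
  have hab : a ≫ b = 𝟙 P := isPullback_hom_ext hpb
    (by rw [Category.assoc, hb1, ha1, Category.id_comp])
    (by rw [Category.assoc, hb2, ha2, Category.id_comp])
  have hba : b ≫ a = 𝟙 P₀ := isPullback_hom_ext hpb₀
    (by rw [Category.assoc, ha1, hb1, Category.id_comp])
    (by rw [Category.assoc, ha2, hb2, Category.id_comp])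
  have hd : S.IsDeflation (a ≫ q₂) := hq₂.iso_comp ⟨a, b, hab, hba⟩
  rwa [ha2] at hd

theorem isDeflation_zero_to_zero (hDE : S.IsDeflationExact) (hR3p : S.AxiomR3plus)
    (X : C) : S.IsDeflation (0 : X ⟶ (0 : C)) := by
  refine hR3p (0 : (0 : C) ⟶ X) (0 : X ⟶ (0 : C)) ?_
  have : (0 : (0 : C) ⟶ X) ≫ (0 : X ⟶ (0 : C)) = 𝟙 (0 : C) := by simp
  rw [this]; exact hDE.R0

theorem isDeflation_id (hDE : S.IsDeflationExact) (hR3p : S.AxiomR3plus)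
    (X : C) : S.IsDeflation (𝟙 X) := by
  obtain ⟨P, p₁, p₂, hpb, hp₂⟩ :=
    hDE.R2 (isDeflation_zero_to_zero hDE hR3p X) (0 : X ⟶ (0 : C))
  exact hR3p p₂ (𝟙 X) (by simpa using hp₂)

theorem isInflation_id (hDE : S.IsDeflationExact) (hR3p : S.AxiomR3plus)
    (X : C) : S.IsInflation (𝟙 X) :=
  ⟨(0 : C), 0, conflation_of_isKernelOf (isDeflation_zero_to_zero hDE hR3p X)
    isKernelOf_id_of_zero⟩

theorem conflation_pullback (hDE : S.IsDeflationExact)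
    {X Y Z W P : C} {f : X ⟶ Y} {g : Y ⟶ Z} {h : W ⟶ Z} {p₁ : P ⟶ Y} {p₂ : P ⟶ W}
    (hc : S.IsConflation f g) (hpb : IsPullback p₁ p₂ g h) :
    ∃ ft : X ⟶ P, ft ≫ p₁ = f ∧ ft ≫ p₂ = 0 ∧ S.IsConflation ft p₂ := by
  have hw : f ≫ g = (0 : X ⟶ W) ≫ h := by rw [hc.zero, zero_comp]
  set ft := hpb.lift f 0 hw with hft
  have hft1 : ft ≫ p₁ = f := hpb.lift_fst f 0 hw
  have hft2 : ft ≫ p₂ = 0 := hpb.lift_snd f 0 hw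
  have hker : IsKernelOf ft p₂ := by
    refine isKernelOf_mk hft2 ?_ ?_
    · intro T u v huv
      exact hc.isKernelOf.cancel (by rw [← hft1, ← Category.assoc, huv, Category.assoc])
    · intro T t ht
      have h1 : (t ≫ p₁) ≫ g = 0 := by
        rw [Category.assoc, hpb.w, ← Category.assoc, ht, zero_comp]
      obtain ⟨s, hs⟩ := hc.isKernelOf.lift' (t ≫ p₁) h1
      refine ⟨s, isPullback_hom_ext hpb ?_ ?_⟩
      · rw [Category.assoc, hft1, hs]
      · rw [Category.assoc, hft2, comp_zero, ht]
  have hdefl : S.IsDeflation p₂ :=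
    isDeflation_of_isPullback hDE ⟨X, f, hc⟩ hpb
  exact ⟨ft, hft1, hft2, conflation_of_isKernelOf hdefl hker⟩

theorem noether (hDE : S.IsDeflationExact)
    {X Y Z Kq Q Y' : C} {i : X ⟶ Y} {p : Y ⟶ Z} {kq : Kq ⟶ Z} {q : Z ⟶ Q} {n : Y' ⟶ Y}
    (h1 : S.IsConflation i p) (h2 : S.IsConflation kq q)
    (h3 : S.IsConflation n (p ≫ q)) :
    ∃ (x : X ⟶ Y') (r : Y' ⟶ Kq),
      x ≫ n = i ∧ n ≫ p = r ≫ kq ∧ S.IsConflation x r := by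
  obtain ⟨x, hx⟩ := h3.isKernelOf.lift' i
    (by rw [← Category.assoc, h1.zero, zero_comp])
  obtain ⟨r, hr⟩ := h2.isKernelOf.lift' (n ≫ p)
    (by rw [Category.assoc, h3.zero])
  have hpb : IsPullback n r p kq := by
    refine isPullback_mk hr.symm ?_ ?_
    · intro T t s hts
      have h4 : t ≫ p ≫ q = 0 := by
        rw [← Category.assoc, hts, Category.assoc, h2.zero, comp_zero]
      obtain ⟨z, hz⟩ := h3.isKernelOf.lift' t h4
      refine ⟨z, hz, h2.isKernelOf.cancel ?_⟩
      rw [Category.assoc, hr, ← Category.assoc, hz, hts]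
    · intro T u v hu _
      exact h3.isKernelOf.cancel hu
  have hrdefl : S.IsDeflation r :=
    isDeflation_of_isPullback hDE ⟨X, i, h1⟩ hpb
  have hxker : IsKernelOf x r := by
    refine isKernelOf_mk ?_ ?_ ?_
    · refine h2.isKernelOf.cancel ?_
      rw [Category.assoc, hr, ← Category.assoc, hx, h1.zero, zero_comp]
    · intro T u v huv
      exact h1.isKernelOf.cancel (by rw [← hx, ← Category.assoc, huv, Category.assoc])
    · intro T t ht
      have h5 : (t ≫ n) ≫ p = 0 := by
        rw [Category.assoc, ← hr, ← Category.assoc, ht, zero_comp]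
      obtain ⟨s, hs⟩ := h1.isKernelOf.lift' (t ≫ n) h5
      refine ⟨s, h3.isKernelOf.cancel ?_⟩
      rw [Category.assoc, hx, hs]
  exact ⟨x, r, hx, hr.symm, conflation_of_isKernelOf hrdefl hxker⟩

theorem joint (hDE : S.IsDeflationExact) (hR3p : S.AxiomR3plus)
    {X Y Z X' Z' : C} {α : X ⟶ Y} {β : Y ⟶ Z} {α' : X' ⟶ Y} {β' : Y ⟶ Z'}
    (h1 : S.IsConflation α β) (h2 : S.IsConflation α' β')
    (hd : S.IsDeflation (α ≫ β')) : S.IsDeflation (α' ≫ β) := by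
  have hσw : (biprod.snd : X' ⊞ X ⟶ X) ≫ (α ≫ β') = biprod.desc α' α ≫ β' := by
    apply biprod.hom_ext' <;> simp [h2.zero]
  have hpb : IsPullback (biprod.snd : X' ⊞ X ⟶ X) (biprod.desc α' α) (α ≫ β') β' := by
    refine isPullback_mk hσw ?_ ?_
    · intro T t s hts
      have hd0 : (s - t ≫ α) ≫ β' = 0 := by
        rw [Preadditive.sub_comp, Category.assoc, hts, sub_self]
      obtain ⟨b₀, hb₀⟩ := h2.isKernelOf.lift' (s - t ≫ α) hd0
      refine ⟨biprod.lift b₀ t, by simp, ?_⟩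
      rw [biprod.lift_desc, hb₀, sub_add_cancel]
    · intro T u v hu hv
      have hdesc : (biprod.desc α' α : X' ⊞ X ⟶ Y)
          = biprod.fst ≫ α' + biprod.snd ≫ α := by
        apply biprod.hom_ext' <;> simp
      apply biprod.hom_ext _ _ ?_ hu
      apply h2.isKernelOf.cancel
      have h4 : u ≫ biprod.snd ≫ α = v ≫ biprod.snd ≫ α := by
        rw [← Category.assoc, hu, Category.assoc]
      rw [hdesc] at hv
      simp only [Preadditive.comp_add] at hv
      rw [h4] at hv
      have h5 := add_right_cancel hv
      simpa only [Category.assoc] using h5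
  have hσ : S.IsDeflation (biprod.desc α' α) :=
    isDeflation_of_isPullback hDE hd hpb
  have hσβ : biprod.desc α' α ≫ β = biprod.fst ≫ (α' ≫ β) := by
    apply biprod.hom_ext' <;> simp [h1.zero]
  refine hR3p (biprod.fst : X' ⊞ X ⟶ X') (α' ≫ β) ?_
  rw [← hσβ]
  exact hDE.R1 hσ ⟨X, α, h1⟩

end ConflationStruct

end SnakeHelpers

/-- **Snake lemma.**  Let `E` be a deflation-exact category satisfying axiom (R3+).
Given a commutative diagram with exact rows `A₁ → A₂ → A₃ ↠ 0` and
`0 ↣ B₁ → B₂ → B₃` of admissible morphisms and admissible vertical morphisms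
`f₁, f₂, f₃`, there is an induced exact sequence
`ker φ₁ ↣ K₁ → K₂ → K₃ → C₁ → C₂ → C₃ ↠ coker φ₂'` whose first morphism is an
inflation and whose last morphism is a deflation. -/
theorem snake_lemma {C : Type u} [Category.{v} C] [Preadditive C]
    [HasZeroObject C] [HasFiniteBiproducts C] (S : ConflationStruct C)
    (hDE : S.IsDeflationExact) (hR3p : S.AxiomR3plus)
    {A₁ A₂ A₃ B₁ B₂ B₃ : C}
    (φ₁ : A₁ ⟶ A₂) (φ₂ : A₂ ⟶ A₃) (φ₁' : B₁ ⟶ B₂) (φ₂' : B₂ ⟶ B₃)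
    (f₁ : A₁ ⟶ B₁) (f₂ : A₂ ⟶ B₂) (f₃ : A₃ ⟶ B₃)
    (hφ₁ : S.IsAdmissible φ₁) (hφ₂ : S.IsAdmissible φ₂)
    (hφ₁' : S.IsAdmissible φ₁') (hφ₂' : S.IsAdmissible φ₂')
    (htopexact : S.ExactAt φ₁ φ₂) (htopend : S.ExactAt φ₂ (0 : A₃ ⟶ (0 : C)))
    (hbotstart : S.ExactAt (0 : (0 : C) ⟶ B₁) φ₁') (hbotexact : S.ExactAt φ₁' φ₂')
    (hf₁ : S.IsAdmissible f₁) (hf₂ : S.IsAdmissible f₂) (hf₃ : S.IsAdmissible f₃)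
    (hsq₁ : φ₁ ≫ f₂ = f₁ ≫ φ₁') (hsq₂ : φ₂ ≫ f₃ = f₂ ≫ φ₂') :
    ∃ (Kφ K₁ K₂ K₃ C₁ C₂ C₃ Cφ : C)
      (kφ : Kφ ⟶ A₁) (cφ : B₃ ⟶ Cφ)
      (k₁ : K₁ ⟶ A₁) (k₂ : K₂ ⟶ A₂) (k₃ : K₃ ⟶ A₃)
      (c₁ : B₁ ⟶ C₁) (c₂ : B₂ ⟶ C₂) (c₃ : B₃ ⟶ C₃)
      (ι : Kφ ⟶ K₁) (ψ₁ : K₁ ⟶ K₂) (ψ₂ : K₂ ⟶ K₃) (δ : K₃ ⟶ C₁)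
      (ψ₁' : C₁ ⟶ C₂) (ψ₂' : C₂ ⟶ C₃) (π : C₃ ⟶ Cφ),
      IsKernelOf kφ φ₁ ∧ IsCokernelOf cφ φ₂' ∧
      IsKernelOf k₁ f₁ ∧ IsKernelOf k₂ f₂ ∧ IsKernelOf k₃ f₃ ∧
      IsCokernelOf c₁ f₁ ∧ IsCokernelOf c₂ f₂ ∧ IsCokernelOf c₃ f₃ ∧
      ι ≫ k₁ = kφ ∧ ψ₁ ≫ k₂ = k₁ ≫ φ₁ ∧ ψ₂ ≫ k₃ = k₂ ≫ φ₂ ∧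
      c₁ ≫ ψ₁' = φ₁' ≫ c₂ ∧ c₂ ≫ ψ₂' = φ₂' ≫ c₃ ∧ c₃ ≫ π = cφ ∧
      S.IsInflation ι ∧ S.IsDeflation π ∧
      S.ExactAt ι ψ₁ ∧ S.ExactAt ψ₁ ψ₂ ∧ S.ExactAt ψ₂ δ ∧
      S.ExactAt δ ψ₁' ∧ S.ExactAt ψ₁' ψ₂' ∧ S.ExactAt ψ₂' π := by
  -- Unpack the exactness and admissibility data.
  obtain ⟨I, e, m, he, hmI, hem, hmker⟩ := And.left htopexact
  obtain ⟨J3, e3, m3, he3, hm3, hem3, hm3ker⟩ := And.left htopend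
  obtain ⟨J0, e0, m0, he0, hm0, hem0, he0cok⟩ := And.right hbotstart
  obtain ⟨J', e', m', he', hm', hem', he'cok⟩ := And.right hbotexact
  obtain ⟨I₁, p₁, j₁, hp₁, hj₁, hpj₁⟩ := hf₁
  obtain ⟨I₂, p₂, j₂, hp₂, hj₂, hpj₂⟩ := hf₂
  obtain ⟨I₃, p₃, j₃, hp₃, hj₃, hpj₃⟩ := hf₃
  obtain ⟨K₁, k₁, hk₁⟩ := hp₁
  obtain ⟨K₂, k₂, hk₂⟩ := hp₂
  obtain ⟨K₃, k₃, hk₃⟩ := hp₃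
  obtain ⟨C₁, c₁, hc₁⟩ := hj₁
  obtain ⟨C₂, c₂, hc₂⟩ := hj₂
  obtain ⟨C₃, c₃, hc₃⟩ := hj₃
  obtain ⟨Kφ, kφ, hkφ⟩ := he
  obtain ⟨Cφ, cφ, hcφ⟩ := hm'
  -- φ₂ is a deflation, φ₁' is an inflation.
  haveI hm3iso : IsIso m3 := hm3ker.isIso_of_zero rfl
  have hφ₂d : S.IsDeflation φ₂ := by
    have := he3.comp_iso (asIso m3)
    rwa [asIso_hom, hem3] at this
  haveI he0iso : IsIso e0 := he0cok.isIso_of_zero rfl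
  have hφ₁'i : S.IsInflation φ₁' := by
    have := hm0.iso_comp (asIso e0)
    rwa [asIso_hom, hem0] at this
  have hmφ₂ : S.IsConflation m φ₂ := ConflationStruct.conflation_of_isKernelOf hφ₂d hmker
  have hφe' : S.IsConflation φ₁' e' := ConflationStruct.conflation_of_isCokernelOf hφ₁'i he'cok
  -- kernels and cokernels of the fᵢ.
  have hk₁f : IsKernelOf k₁ f₁ := by
    have := hk₁.isKernelOf.comp_mono (fun u v h => hc₁.isKernelOf.cancel h)
    rwa [hpj₁] at this
  have hk₂f : IsKernelOf k₂ f₂ := by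
    have := hk₂.isKernelOf.comp_mono (fun u v h => hc₂.isKernelOf.cancel h)
    rwa [hpj₂] at this
  have hk₃f : IsKernelOf k₃ f₃ := by
    have := hk₃.isKernelOf.comp_mono (fun u v h => hc₃.isKernelOf.cancel h)
    rwa [hpj₃] at this
  have hc₁f : IsCokernelOf c₁ f₁ := by
    have := hc₁.isCokernelOf.epi_comp (fun u v h => hk₁.isCokernelOf.cancel h)
    rwa [hpj₁] at this
  have hc₂f : IsCokernelOf c₂ f₂ := by
    have := hc₂.isCokernelOf.epi_comp (fun u v h => hk₂.isCokernelOf.cancel h)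
    rwa [hpj₂] at this
  have hc₃f : IsCokernelOf c₃ f₃ := by
    have := hc₃.isCokernelOf.epi_comp (fun u v h => hk₃.isCokernelOf.cancel h)
    rwa [hpj₃] at this
  have hkφf : IsKernelOf kφ φ₁ := by
    have := hkφ.isKernelOf.comp_mono (fun u v h => hmφ₂.isKernelOf.cancel h)
    rwa [hem] at this
  have hcφf : IsCokernelOf cφ φ₂' := by
    have := hcφ.isCokernelOf.epi_comp (fun u v h => he'.cancel h)
    rwa [hem'] at this
  -- basic zero composites
  have hφφ : φ₁ ≫ φ₂ = 0 := by rw [← hem, Category.assoc, hmφ₂.zero, comp_zero]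
  have hφ'φ' : φ₁' ≫ φ₂' = 0 := by
    rw [← hem', ← Category.assoc, hφe'.zero, zero_comp]
  -- the induced morphisms on kernels and cokernels
  obtain ⟨ψ₁, hψ₁⟩ := hk₂f.lift' (k₁ ≫ φ₁) (by
    rw [Category.assoc, hsq₁, ← Category.assoc, hk₁f.comp_eq_zero, zero_comp])
  obtain ⟨ψ₂, hψ₂⟩ := hk₃f.lift' (k₂ ≫ φ₂) (by
    rw [Category.assoc, hsq₂, ← Category.assoc, hk₂f.comp_eq_zero, zero_comp])
  obtain ⟨ψ₁', hψ₁'⟩ := hc₁f.desc' (φ₁' ≫ c₂) (by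
    rw [← Category.assoc, ← hsq₁, Category.assoc, hc₂f.comp_eq_zero, comp_zero])
  obtain ⟨ψ₂', hψ₂'⟩ := hc₂f.desc' (φ₂' ≫ c₃) (by
    rw [← Category.assoc, ← hsq₂, Category.assoc, hc₃f.comp_eq_zero, comp_zero])
  have hφ₂'cφ : φ₂' ≫ cφ = 0 := by
    rw [← hem', Category.assoc, hcφ.zero, comp_zero]
  have hf₃cφ : f₃ ≫ cφ = 0 := hφ₂d.cancel (by
    rw [← Category.assoc, hsq₂, Category.assoc, hφ₂'cφ, comp_zero, comp_zero])
  obtain ⟨π, hπ⟩ := hc₃f.desc' cφ hf₃cφ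
  have hπd : S.IsDeflation π := hR3p c₃ π (by rw [hπ]; exact ⟨J', m', hcφ⟩)
  obtain ⟨M₅, μ₅, hμ₅⟩ := hπd
  have hπd : S.IsDeflation π := ⟨M₅, μ₅, hμ₅⟩
  -- the morphism ĵ : I₃ ⟶ J' and ω : J' ⟶ M₅
  have hj₃cφ : j₃ ≫ cφ = 0 := hk₃.isCokernelOf.cancel (by
    rw [← Category.assoc, hpj₃, hf₃cφ, comp_zero])
  obtain ⟨jh, hjh⟩ := hcφ.isKernelOf.lift' j₃ hj₃cφ
  obtain ⟨ω, hω⟩ := hμ₅.isKernelOf.lift' (m' ≫ c₃) (by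
    rw [Category.assoc, hπ, hcφ.zero])
  have hωpb : IsPullback m' ω c₃ μ₅ := by
    refine isPullback_mk hω.symm ?_ ?_
    · intro T t s hts
      have h1 : t ≫ cφ = 0 := by
        rw [← hπ, ← Category.assoc, hts, Category.assoc, hμ₅.zero, comp_zero]
      obtain ⟨zz, hzz⟩ := hcφ.isKernelOf.lift' t h1
      refine ⟨zz, hzz, hμ₅.isKernelOf.cancel ?_⟩
      rw [Category.assoc, hω, ← Category.assoc, hzz, hts]
    · intro T u v hu _
      exact hcφ.isKernelOf.cancel hu
  have hωd : S.IsDeflation ω :=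
    ConflationStruct.isDeflation_of_isPullback hDE ⟨I₃, j₃, hc₃⟩ hωpb
  have hjhker : IsKernelOf jh ω := by
    refine isKernelOf_mk ?_ ?_ ?_
    · refine hμ₅.isKernelOf.cancel ?_
      rw [Category.assoc, hω, ← Category.assoc, hjh, hc₃.zero, zero_comp]
    · intro T u v huv
      exact hc₃.isKernelOf.cancel (by rw [← hjh, ← Category.assoc, huv, Category.assoc])
    · intro T t ht
      have h2 : (t ≫ m') ≫ c₃ = 0 := by
        rw [Category.assoc, ← hω, ← Category.assoc, ht, zero_comp]
      obtain ⟨s, hs⟩ := hc₃.isKernelOf.lift' (t ≫ m') h2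
      refine ⟨s, hcφ.isKernelOf.cancel ?_⟩
      rw [Category.assoc, hjh, hs]
  have hjhω : S.IsConflation jh ω := ConflationStruct.conflation_of_isKernelOf hωd hjhker
  -- ε₅
  have hψ₂'π : ψ₂' ≫ π = 0 := hc₂.isCokernelOf.cancel (by
    rw [← Category.assoc, hψ₂', Category.assoc, hπ, hφ₂'cφ, comp_zero])
  obtain ⟨ε₅, hε₅⟩ := hμ₅.isKernelOf.lift' ψ₂' hψ₂'π
  have heωc : e' ≫ ω = c₂ ≫ ε₅ := hμ₅.isKernelOf.cancel (by
    simp only [Category.assoc]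
    rw [hω, hε₅, hψ₂', ← hem', Category.assoc])
  have hε₅d : S.IsDeflation ε₅ := hR3p c₂ ε₅ (by
    rw [← heωc]; exact hDE.R1 he' hωd)
  obtain ⟨M₄, μ₄, hμ₄⟩ := hε₅d
  have hε₅d : S.IsDeflation ε₅ := ⟨M₄, μ₄, hμ₄⟩
  have hc₂ε₅d : S.IsDeflation (c₂ ≫ ε₅) := by rw [← heωc]; exact hDE.R1 he' hωd
  obtain ⟨R', n', hn'⟩ := hc₂ε₅d
  -- the two Noether conflations on R'
  obtain ⟨x, r, hxn, hnc, hxr⟩ := ConflationStruct.noether hDE hc₂ hμ₄ hn'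
  have hn'2 : S.IsConflation n' (e' ≫ ω) := by rw [heωc]; exact hn'
  obtain ⟨x', r', hx'n, hne', hx'r'⟩ := ConflationStruct.noether hDE hφe' hjhω hn'2
  -- x ≫ r' is a deflation
  have hxr'd : S.IsDeflation (x ≫ r') := by
    refine hR3p p₂ (x ≫ r') ?_
    have key : p₂ ≫ (x ≫ r') = φ₂ ≫ p₃ := hc₃.isKernelOf.cancel (by
      calc (p₂ ≫ x ≫ r') ≫ j₃
          = p₂ ≫ x ≫ (r' ≫ jh) ≫ m' := by rw [← hjh]; simp only [Category.assoc]
        _ = p₂ ≫ x ≫ (n' ≫ e') ≫ m' := by rw [← hne']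
        _ = (p₂ ≫ (x ≫ n')) ≫ e' ≫ m' := by simp only [Category.assoc]
        _ = (p₂ ≫ j₂) ≫ e' ≫ m' := by rw [hxn]
        _ = f₂ ≫ φ₂' := by rw [hpj₂, hem']
        _ = φ₂ ≫ f₃ := hsq₂.symm
        _ = (φ₂ ≫ p₃) ≫ j₃ := by rw [← hpj₃]; simp only [Category.assoc])
    rw [key]
    exact hDE.R1 hφ₂d ⟨K₃, k₃, hk₃⟩
  have hx'rd : S.IsDeflation (x' ≫ r) := ConflationStruct.joint hDE hR3p hxr hx'r' hxr'd
  -- ε₄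
  have hψ₁'ε₅ : ψ₁' ≫ ε₅ = 0 := by
    have h6 : c₁ ≫ (ψ₁' ≫ ε₅) = c₁ ≫ 0 := hμ₅.isKernelOf.cancel (by
      calc (c₁ ≫ ψ₁' ≫ ε₅) ≫ μ₅
          = (c₁ ≫ ψ₁') ≫ ε₅ ≫ μ₅ := by simp only [Category.assoc]
        _ = (φ₁' ≫ c₂) ≫ ψ₂' := by rw [hψ₁', hε₅]
        _ = φ₁' ≫ φ₂' ≫ c₃ := by rw [Category.assoc, hψ₂']
        _ = (c₁ ≫ 0) ≫ μ₅ := by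
            rw [← Category.assoc, hφ'φ', zero_comp, comp_zero, zero_comp])
    exact hc₁.isCokernelOf.cancel h6
  obtain ⟨ε₄, hε₄⟩ := hμ₄.isKernelOf.lift' ψ₁' hψ₁'ε₅
  have hcε₄ : c₁ ≫ ε₄ = x' ≫ r := hμ₄.isKernelOf.cancel (by
    calc (c₁ ≫ ε₄) ≫ μ₄ = c₁ ≫ ψ₁' := by rw [Category.assoc, hε₄]
      _ = (x' ≫ n') ≫ c₂ := by rw [hψ₁', hx'n]
      _ = x' ≫ r ≫ μ₄ := by rw [Category.assoc, hnc]
      _ = (x' ≫ r) ≫ μ₄ := by rw [Category.assoc])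
  have hε₄d : S.IsDeflation ε₄ := hR3p c₁ ε₄ (by rw [hcε₄]; exact hx'rd)
  obtain ⟨M₃, μ₃, hμ₃⟩ := hε₄d
  have hε₄d : S.IsDeflation ε₄ := ⟨M₃, μ₃, hμ₃⟩
  -- the pullback P of φ₂ along k₃, and the morphisms u, δ
  obtain ⟨P, a, b, hPpb, hbd⟩ := hDE.R2 hφ₂d k₃
  obtain ⟨mt, hmta, hmtb, hmtc⟩ := ConflationStruct.conflation_pullback hDE hmφ₂ hPpb
  have hafe : (a ≫ f₂) ≫ e' = 0 := hcφ.isKernelOf.cancel (by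
    calc ((a ≫ f₂) ≫ e') ≫ m' = a ≫ f₂ ≫ e' ≫ m' := by simp only [Category.assoc]
      _ = a ≫ φ₂ ≫ f₃ := by rw [hem', ← hsq₂]
      _ = b ≫ k₃ ≫ f₃ := by
          rw [← Category.assoc, hPpb.w, Category.assoc]
      _ = 0 ≫ m' := by rw [hk₃f.comp_eq_zero, comp_zero, zero_comp])
  obtain ⟨u, hu⟩ := hφe'.isKernelOf.lift' (a ≫ f₂) hafe
  have hemtu : (e ≫ mt ≫ u) = f₁ := hφe'.isKernelOf.cancel (by
    calc (e ≫ mt ≫ u) ≫ φ₁' = e ≫ mt ≫ u ≫ φ₁' := by simp only [Category.assoc]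
      _ = e ≫ mt ≫ a ≫ f₂ := by rw [hu]
      _ = e ≫ m ≫ f₂ := by rw [← Category.assoc mt a f₂, hmta]
      _ = φ₁ ≫ f₂ := by rw [← Category.assoc, hem]
      _ = f₁ ≫ φ₁' := hsq₁)
  have hmtuc : mt ≫ (u ≫ c₁) = 0 := by
    have h7 : e ≫ (mt ≫ (u ≫ c₁)) = e ≫ 0 := by
      calc e ≫ mt ≫ u ≫ c₁ = (e ≫ mt ≫ u) ≫ c₁ := by simp only [Category.assoc]
        _ = f₁ ≫ c₁ := by rw [hemtu]
        _ = e ≫ 0 := by rw [hc₁f.comp_eq_zero, comp_zero]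
    have hed : S.IsDeflation e := ⟨Kφ, kφ, hkφ⟩
    exact hed.cancel h7
  obtain ⟨δ, hδ⟩ := hmtc.isCokernelOf.desc' (u ≫ c₁) hmtuc
  -- ε₃
  have hδε₄ : δ ≫ ε₄ = 0 := by
    have h8 : b ≫ (δ ≫ ε₄) = b ≫ 0 := hμ₄.isKernelOf.cancel (by
      calc (b ≫ δ ≫ ε₄) ≫ μ₄ = (b ≫ δ) ≫ ε₄ ≫ μ₄ := by simp only [Category.assoc]
        _ = (u ≫ c₁) ≫ ψ₁' := by rw [hδ, hε₄]
        _ = u ≫ φ₁' ≫ c₂ := by rw [Category.assoc, hψ₁']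
        _ = (a ≫ f₂) ≫ c₂ := by rw [← Category.assoc, hu]
        _ = (b ≫ 0) ≫ μ₄ := by
            rw [← hpj₂]
            simp only [Category.assoc]
            rw [hc₂.zero]
            simp only [comp_zero, zero_comp])
    exact hbd.cancel h8
  obtain ⟨ε₃, hε₃⟩ := hμ₃.isKernelOf.lift' δ hδε₄
  -- the pullback V of c₁ along μ₃
  obtain ⟨V, v₁, v₂, hVpb, hv₂d⟩ := hDE.R2 (⟨I₁, j₁, hc₁⟩ : S.IsDeflation c₁) μ₃
  have hvφc : (v₁ ≫ φ₁') ≫ c₂ = 0 := by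
    calc (v₁ ≫ φ₁') ≫ c₂ = v₁ ≫ c₁ ≫ ψ₁' := by rw [Category.assoc, ← hψ₁']
      _ = (v₂ ≫ μ₃) ≫ ψ₁' := by rw [← Category.assoc, hVpb.w]
      _ = v₂ ≫ μ₃ ≫ ε₄ ≫ μ₄ := by rw [← hε₄]; simp only [Category.assoc]
      _ = 0 := by rw [← Category.assoc μ₃ ε₄ μ₄, hμ₃.zero, zero_comp, comp_zero]
  obtain ⟨z, hz⟩ := hc₂.isKernelOf.lift' (v₁ ≫ φ₁') hvφc
  have hucμ : u ≫ c₁ = (b ≫ ε₃) ≫ μ₃ := by rw [Category.assoc, hε₃, hδ]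
  obtain ⟨tV, htV1, htV2⟩ : ∃ tV : P ⟶ V, tV ≫ v₁ = u ∧ tV ≫ v₂ = b ≫ ε₃ :=
    ⟨hVpb.lift u (b ≫ ε₃) hucμ, hVpb.lift_fst _ _ _, hVpb.lift_snd _ _ _⟩
  have haz : a ≫ p₂ = tV ≫ z := hc₂.isKernelOf.cancel (by
    calc (a ≫ p₂) ≫ j₂ = a ≫ f₂ := by rw [Category.assoc, hpj₂]
      _ = u ≫ φ₁' := hu.symm
      _ = (tV ≫ v₁) ≫ φ₁' := by rw [htV1]
      _ = (tV ≫ z) ≫ j₂ := by rw [Category.assoc, ← hz, Category.assoc])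
  have hPz : IsPullback a tV p₂ z := by
    refine isPullback_mk haz ?_ ?_
    · intro T α τ hατ
      have hκ0 : (α ≫ φ₂) ≫ f₃ = 0 := by
        calc (α ≫ φ₂) ≫ f₃ = α ≫ f₂ ≫ φ₂' := by rw [Category.assoc, hsq₂]
          _ = (α ≫ p₂) ≫ j₂ ≫ φ₂' := by rw [← hpj₂]; simp only [Category.assoc]
          _ = (τ ≫ z) ≫ j₂ ≫ φ₂' := by rw [hατ]
          _ = τ ≫ (z ≫ j₂) ≫ φ₂' := by simp only [Category.assoc]
          _ = τ ≫ (v₁ ≫ φ₁') ≫ φ₂' := by rw [hz]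
          _ = (τ ≫ v₁) ≫ (φ₁' ≫ φ₂') := by simp only [Category.assoc]
          _ = 0 := by rw [hφ'φ', comp_zero]
      obtain ⟨κ, hκ⟩ := hk₃f.lift' (α ≫ φ₂) hκ0
      obtain ⟨w, hw1, hw2⟩ : ∃ w : T ⟶ P, w ≫ a = α ∧ w ≫ b = κ :=
        ⟨hPpb.lift α κ hκ.symm, hPpb.lift_fst _ _ _, hPpb.lift_snd _ _ _⟩
      have hwu : w ≫ u = τ ≫ v₁ := hφe'.isKernelOf.cancel (by
        calc (w ≫ u) ≫ φ₁' = w ≫ a ≫ f₂ := by rw [Category.assoc, hu]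
          _ = α ≫ f₂ := by rw [← Category.assoc, hw1]
          _ = α ≫ p₂ ≫ j₂ := by rw [← hpj₂]
          _ = (α ≫ p₂) ≫ j₂ := by simp only [Category.assoc]
          _ = (τ ≫ z) ≫ j₂ := by rw [hατ]
          _ = τ ≫ v₁ ≫ φ₁' := by rw [Category.assoc, hz]
          _ = (τ ≫ v₁) ≫ φ₁' := by simp only [Category.assoc])
      refine ⟨w, hw1, isPullback_hom_ext hVpb ?_ ?_⟩
      · rw [Category.assoc, htV1, hwu]
      · refine hμ₃.isKernelOf.cancel ?_
        calc ((w ≫ tV) ≫ v₂) ≫ μ₃ = w ≫ (tV ≫ v₂) ≫ μ₃ := by simp only [Category.assoc]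
          _ = w ≫ (b ≫ ε₃) ≫ μ₃ := by rw [htV2]
          _ = w ≫ b ≫ δ := by simp only [Category.assoc]; rw [hε₃]
          _ = w ≫ u ≫ c₁ := by rw [hδ]
          _ = (w ≫ u) ≫ c₁ := by simp only [Category.assoc]
          _ = (τ ≫ v₁) ≫ c₁ := by rw [hwu]
          _ = (τ ≫ v₂) ≫ μ₃ := by rw [Category.assoc, hVpb.w, Category.assoc]
    · intro T w1 w2 hwa hwt
      have hwb : w1 ≫ b = w2 ≫ b := hk₃f.cancel (by
        calc (w1 ≫ b) ≫ k₃ = w1 ≫ a ≫ φ₂ := by rw [Category.assoc, ← hPpb.w]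
          _ = (w1 ≫ a) ≫ φ₂ := by simp only [Category.assoc]
          _ = (w2 ≫ a) ≫ φ₂ := by rw [hwa]
          _ = (w2 ≫ b) ≫ k₃ := by rw [Category.assoc, hPpb.w, ← Category.assoc])
      exact isPullback_hom_ext hPpb hwa hwb
  have htVd : S.IsDeflation tV :=
    ConflationStruct.isDeflation_of_isPullback hDE (⟨K₂, k₂, hk₂⟩ : S.IsDeflation p₂) hPz
  have hbε₃d : S.IsDeflation (b ≫ ε₃) := by rw [← htV2]; exact hDE.R1 htVd hv₂d
  have hε₃d : S.IsDeflation ε₃ := hR3p b ε₃ hbε₃d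
  obtain ⟨M₂, μ₂, hμ₂⟩ := hε₃d
  have hε₃d : S.IsDeflation ε₃ := ⟨M₂, μ₂, hμ₂⟩
  -- the canonical map kc : K₂ ⟶ P and the third Noether conflation
  obtain ⟨kc, hkca, hkcb⟩ : ∃ kc : K₂ ⟶ P, kc ≫ a = k₂ ∧ kc ≫ b = ψ₂ :=
    ⟨hPpb.lift k₂ ψ₂ hψ₂.symm, hPpb.lift_fst _ _ _, hPpb.lift_snd _ _ _⟩
  have hkcu : kc ≫ u = 0 := hφe'.isKernelOf.cancel (by
    calc (kc ≫ u) ≫ φ₁' = kc ≫ a ≫ f₂ := by rw [Category.assoc, hu]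
      _ = k₂ ≫ f₂ := by rw [← Category.assoc, hkca]
      _ = 0 ≫ φ₁' := by rw [hk₂f.comp_eq_zero, zero_comp])
  have hkaφ : kc ≫ a ≫ φ₂ = k₂ ≫ φ₂ := by rw [← Category.assoc, hkca]
  have hkcker : IsKernelOf kc u := by
    refine isKernelOf_mk hkcu ?_ ?_
    · intro T u1 v1 h
      refine hk₂.isKernelOf.cancel ?_
      rw [← hkca, ← Category.assoc, h, Category.assoc]
    · intro T t ht
      have h9 : (t ≫ a) ≫ f₂ = 0 := by
        calc (t ≫ a) ≫ f₂ = t ≫ u ≫ φ₁' := by rw [Category.assoc, ← hu]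
          _ = 0 := by rw [← Category.assoc, ht, zero_comp]
      obtain ⟨s, hs⟩ := hk₂f.lift' (t ≫ a) h9
      refine ⟨s, isPullback_hom_ext hPpb ?_ ?_⟩
      · rw [Category.assoc, hkca, hs]
      · refine hk₃f.cancel ?_
        calc ((s ≫ kc) ≫ b) ≫ k₃ = s ≫ kc ≫ a ≫ φ₂ := by
              simp only [Category.assoc]; rw [← hPpb.w]
          _ = s ≫ k₂ ≫ φ₂ := by rw [hkaφ]
          _ = (s ≫ k₂) ≫ φ₂ := by simp only [Category.assoc]
          _ = (t ≫ a) ≫ φ₂ := by rw [hs]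
          _ = t ≫ b ≫ k₃ := by rw [Category.assoc, hPpb.w]
          _ = (t ≫ b) ≫ k₃ := by simp only [Category.assoc]
  obtain ⟨W', n'', hn''⟩ := hbε₃d
  have hbε₃d : S.IsDeflation (b ≫ ε₃) := ⟨W', n'', hn''⟩
  obtain ⟨x'', r'', hx''n, hn''b, hx''r''⟩ := ConflationStruct.noether hDE hmtc hμ₂ hn''
  -- ℓ and ρ
  have hψ₂δ : ψ₂ ≫ δ = 0 := by
    calc ψ₂ ≫ δ = (kc ≫ b) ≫ δ := by rw [hkcb]
      _ = kc ≫ u ≫ c₁ := by rw [Category.assoc, hδ]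
      _ = 0 := by rw [← Category.assoc, hkcu, zero_comp]
  have hkcbε : kc ≫ (b ≫ ε₃) = 0 := hμ₃.isKernelOf.cancel (by
    calc (kc ≫ b ≫ ε₃) ≫ μ₃ = (kc ≫ b) ≫ ε₃ ≫ μ₃ := by simp only [Category.assoc]
      _ = ψ₂ ≫ δ := by rw [hkcb, hε₃]
      _ = 0 ≫ μ₃ := by rw [hψ₂δ, zero_comp])
  obtain ⟨l, hl⟩ := hn''.isKernelOf.lift' kc hkcbε
  have hnuc : n'' ≫ u ≫ c₁ = 0 := by
    calc n'' ≫ u ≫ c₁ = n'' ≫ b ≫ δ := by rw [hδ]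
      _ = (n'' ≫ b) ≫ δ := by simp only [Category.assoc]
      _ = r'' ≫ μ₂ ≫ ε₃ ≫ μ₃ := by rw [hn''b, ← hε₃]; simp only [Category.assoc]
      _ = 0 := by rw [← Category.assoc μ₂ ε₃ μ₃, hμ₂.zero, zero_comp, comp_zero]
  obtain ⟨ρ, hρ⟩ := hc₁.isKernelOf.lift' (n'' ≫ u) (by rw [Category.assoc]; exact hnuc)
  obtain ⟨th, hth1, hth2⟩ : ∃ th : A₁ ⟶ P, th ≫ a = φ₁ ∧ th ≫ b = 0 :=
    ⟨hPpb.lift φ₁ 0 (by rw [hφφ, zero_comp]), hPpb.lift_fst _ _ _, hPpb.lift_snd _ _ _⟩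
  have hthu : th ≫ u = f₁ := hφe'.isKernelOf.cancel (by
    calc (th ≫ u) ≫ φ₁' = th ≫ a ≫ f₂ := by rw [Category.assoc, hu]
      _ = φ₁ ≫ f₂ := by rw [← Category.assoc, hth1]
      _ = f₁ ≫ φ₁' := hsq₁)
  obtain ⟨th', hth'⟩ := hn''.isKernelOf.lift' th (by
    rw [← Category.assoc, hth2, zero_comp])
  have hth'ρ : th' ≫ ρ = p₁ := hc₁.isKernelOf.cancel (by
    calc (th' ≫ ρ) ≫ j₁ = th' ≫ n'' ≫ u := by rw [Category.assoc, hρ]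
      _ = th ≫ u := by rw [← Category.assoc, hth']
      _ = p₁ ≫ j₁ := by rw [hthu, hpj₁])
  have hρd : S.IsDeflation ρ := hR3p th' ρ (by rw [hth'ρ]; exact ⟨K₁, k₁, hk₁⟩)
  have hlker : IsKernelOf l ρ := by
    refine isKernelOf_mk ?_ ?_ ?_
    · refine hc₁.isKernelOf.cancel ?_
      calc (l ≫ ρ) ≫ j₁ = l ≫ n'' ≫ u := by rw [Category.assoc, hρ]
        _ = kc ≫ u := by rw [← Category.assoc, hl]
        _ = 0 ≫ j₁ := by rw [hkcu, zero_comp]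
    · intro T u1 v1 h
      refine hkcker.cancel ?_
      rw [← hl, ← Category.assoc, h, Category.assoc]
    · intro T t ht
      have h10 : (t ≫ n'') ≫ u = 0 := by
        calc (t ≫ n'') ≫ u = t ≫ ρ ≫ j₁ := by rw [Category.assoc, ← hρ]
          _ = 0 := by rw [← Category.assoc, ht, zero_comp]
      obtain ⟨s, hs⟩ := hkcker.lift' (t ≫ n'') h10
      refine ⟨s, hn''.isKernelOf.cancel ?_⟩
      rw [Category.assoc, hl, hs]
  have hlρ : S.IsConflation l ρ := ConflationStruct.conflation_of_isKernelOf hρd hlker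
  have hemt : e ≫ mt = th := isPullback_hom_ext hPpb
    (by rw [Category.assoc, hmta, hem, hth1])
    (by rw [Category.assoc, hmtb, comp_zero, hth2])
  have hex'' : e ≫ x'' = th' := hn''.isKernelOf.cancel (by
    rw [Category.assoc, hx''n, hemt, hth'])
  have hx''ρd : S.IsDeflation (x'' ≫ ρ) := hR3p e (x'' ≫ ρ) (by
    rw [← Category.assoc, hex'', hth'ρ]; exact ⟨K₁, k₁, hk₁⟩)
  -- ε₂ := l ≫ r''
  have hε₂d : S.IsDeflation (l ≫ r'') := ConflationStruct.joint hDE hR3p hx''r'' hlρ hx''ρd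
  have hε₂μ : (l ≫ r'') ≫ μ₂ = ψ₂ := by
    calc (l ≫ r'') ≫ μ₂ = l ≫ n'' ≫ b := by rw [Category.assoc, ← hn''b]
      _ = kc ≫ b := by rw [← Category.assoc, hl]
      _ = ψ₂ := hkcb
  obtain ⟨M₁, μ₁, hμ₁⟩ := hε₂d
  have hε₂d : S.IsDeflation (l ≫ r'') := ⟨M₁, μ₁, hμ₁⟩
  -- ε₁
  have hψψ : ψ₁ ≫ ψ₂ = 0 := hk₃f.cancel (by
    calc (ψ₁ ≫ ψ₂) ≫ k₃ = ψ₁ ≫ k₂ ≫ φ₂ := by rw [Category.assoc, hψ₂]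
      _ = (k₁ ≫ φ₁) ≫ φ₂ := by rw [← Category.assoc, hψ₁]
      _ = 0 ≫ k₃ := by rw [Category.assoc, hφφ, comp_zero, zero_comp])
  have hψ₁ε₂ : ψ₁ ≫ (l ≫ r'') = 0 := hμ₂.isKernelOf.cancel (by
    calc (ψ₁ ≫ l ≫ r'') ≫ μ₂ = ψ₁ ≫ (l ≫ r'') ≫ μ₂ := by simp only [Category.assoc]
      _ = ψ₁ ≫ ψ₂ := by rw [hε₂μ]
      _ = 0 ≫ μ₂ := by rw [hψψ, zero_comp])
  obtain ⟨ε₁, hε₁⟩ := hμ₁.isKernelOf.lift' ψ₁ hψ₁ε₂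
  have hε₁k : ε₁ ≫ μ₁ ≫ k₂ = ψ₁ ≫ k₂ := by rw [← Category.assoc, hε₁]
  have hμψ₂ : μ₁ ≫ ψ₂ = 0 := by
    calc μ₁ ≫ ψ₂ = (μ₁ ≫ (l ≫ r'')) ≫ μ₂ := by rw [Category.assoc, hε₂μ]
      _ = 0 := by rw [hμ₁.zero, zero_comp]
  have hμkφ : (μ₁ ≫ k₂) ≫ φ₂ = 0 := by
    calc (μ₁ ≫ k₂) ≫ φ₂ = μ₁ ≫ ψ₂ ≫ k₃ := by rw [Category.assoc, ← hψ₂]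
      _ = 0 := by rw [← Category.assoc, hμψ₂, zero_comp]
  obtain ⟨m₁, hm₁⟩ := hmφ₂.isKernelOf.lift' (μ₁ ≫ k₂) hμkφ
  have hm₁f : m₁ ≫ m ≫ f₂ = μ₁ ≫ k₂ ≫ f₂ := by
    rw [← Category.assoc, hm₁, Category.assoc]
  have hPK : IsPullback k₁ ε₁ e m₁ := by
    refine isPullback_mk ?_ ?_ ?_
    · refine hmφ₂.isKernelOf.cancel ?_
      calc (k₁ ≫ e) ≫ m = k₁ ≫ φ₁ := by rw [Category.assoc, hem]
        _ = ψ₁ ≫ k₂ := hψ₁.symm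
        _ = (ε₁ ≫ μ₁) ≫ k₂ := by rw [hε₁]
        _ = ε₁ ≫ m₁ ≫ m := by rw [Category.assoc, ← hm₁]
        _ = (ε₁ ≫ m₁) ≫ m := by simp only [Category.assoc]
    · intro T t s hts
      have htf : t ≫ f₁ = 0 := hφe'.isKernelOf.cancel (by
        calc (t ≫ f₁) ≫ φ₁' = t ≫ φ₁ ≫ f₂ := by rw [Category.assoc, ← hsq₁]
          _ = (t ≫ e) ≫ m ≫ f₂ := by rw [← hem]; simp only [Category.assoc]
          _ = (s ≫ m₁) ≫ m ≫ f₂ := by rw [hts]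
          _ = s ≫ μ₁ ≫ k₂ ≫ f₂ := by simp only [Category.assoc]; rw [hm₁f]
          _ = 0 ≫ φ₁' := by
              rw [hk₂f.comp_eq_zero, comp_zero, comp_zero, zero_comp])
      obtain ⟨w, hw⟩ := hk₁f.lift' t htf
      have hwε : w ≫ ε₁ = s := by
        refine hμ₁.isKernelOf.cancel (hk₂.isKernelOf.cancel ?_)
        calc ((w ≫ ε₁) ≫ μ₁) ≫ k₂ = w ≫ ε₁ ≫ μ₁ ≫ k₂ := by simp only [Category.assoc]
          _ = w ≫ ψ₁ ≫ k₂ := by rw [hε₁k]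
          _ = w ≫ k₁ ≫ φ₁ := by rw [hψ₁]
          _ = t ≫ φ₁ := by rw [← Category.assoc, hw]
          _ = (t ≫ e) ≫ m := by rw [← hem, ← Category.assoc]
          _ = (s ≫ m₁) ≫ m := by rw [hts]
          _ = (s ≫ μ₁) ≫ k₂ := by rw [Category.assoc, hm₁, ← Category.assoc]
      exact ⟨w, hw, hwε⟩
    · intro T u1 v1 h _
      exact hk₁.isKernelOf.cancel h
  have hε₁d : S.IsDeflation ε₁ :=
    ConflationStruct.isDeflation_of_isPullback hDE (⟨Kφ, kφ, hkφ⟩ : S.IsDeflation e) hPK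
  -- ι
  have hkφf₁ : kφ ≫ f₁ = 0 := hφe'.isKernelOf.cancel (by
    calc (kφ ≫ f₁) ≫ φ₁' = kφ ≫ φ₁ ≫ f₂ := by rw [Category.assoc, ← hsq₁]
      _ = ((kφ ≫ e) ≫ m) ≫ f₂ := by rw [← hem]; simp only [Category.assoc]
      _ = 0 ≫ φ₁' := by rw [hkφ.zero]; simp only [zero_comp])
  obtain ⟨ι, hι⟩ := hk₁f.lift' kφ hkφf₁
  have hει : ι ≫ ε₁ = 0 := by
    refine hμ₁.isKernelOf.cancel (hk₂.isKernelOf.cancel ?_)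
    calc ((ι ≫ ε₁) ≫ μ₁) ≫ k₂ = ι ≫ ε₁ ≫ μ₁ ≫ k₂ := by simp only [Category.assoc]
      _ = ι ≫ ψ₁ ≫ k₂ := by rw [hε₁k]
      _ = ι ≫ k₁ ≫ φ₁ := by rw [hψ₁]
      _ = kφ ≫ φ₁ := by rw [← Category.assoc, hι]
      _ = (kφ ≫ e) ≫ m := by rw [← hem, ← Category.assoc]
      _ = ((0 : Kφ ⟶ M₁) ≫ μ₁) ≫ k₂ := by rw [hkφ.zero]; simp only [zero_comp]
  have hιker : IsKernelOf ι ε₁ := by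
    refine isKernelOf_mk hει ?_ ?_
    · intro T u1 v1 h
      refine hkφ.isKernelOf.cancel ?_
      rw [← hι, ← Category.assoc, h, Category.assoc]
    · intro T t ht
      have ht1 : t ≫ ψ₁ = 0 := by
        calc t ≫ ψ₁ = t ≫ ε₁ ≫ μ₁ := by rw [hε₁]
          _ = 0 := by rw [← Category.assoc, ht, zero_comp]
      have ht2 : (t ≫ k₁) ≫ e = 0 := hmφ₂.isKernelOf.cancel (by
        calc ((t ≫ k₁) ≫ e) ≫ m = t ≫ k₁ ≫ φ₁ := by
              simp only [Category.assoc]; rw [hem]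
          _ = t ≫ ψ₁ ≫ k₂ := by rw [hψ₁]
          _ = 0 ≫ m := by rw [← Category.assoc, ht1]; simp only [zero_comp])
      obtain ⟨s, hs⟩ := hkφ.isKernelOf.lift' (t ≫ k₁) ht2
      refine ⟨s, hk₁.isKernelOf.cancel ?_⟩
      rw [Category.assoc, hι, hs]
  have hιε : S.IsConflation ι ε₁ := ConflationStruct.conflation_of_isKernelOf hε₁d hιker
  -- Assemble everything.
  refine ⟨Kφ, K₁, K₂, K₃, C₁, C₂, C₃, Cφ, kφ, cφ, k₁, k₂, k₃, c₁, c₂, c₃,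
    ι, ψ₁, ψ₂, δ, ψ₁', ψ₂', π,
    hkφf, hcφf, hk₁f, hk₂f, hk₃f, hc₁f, hc₂f, hc₃f,
    hι, hψ₁, hψ₂, hψ₁', hψ₂', hπ,
    ⟨M₁, ε₁, hιε⟩, hπd, ?_, ?_, ?_, ?_, ?_, ?_⟩
  · -- ExactAt ι ψ₁
    constructor
    · refine ⟨Kφ, 𝟙 Kφ, ι, ConflationStruct.isDeflation_id hDE hR3p Kφ,
        ⟨M₁, ε₁, hιε⟩, Category.id_comp ι, ?_⟩
      have := hιker.comp_mono (fun u v h => hμ₁.isKernelOf.cancel h)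
      rwa [hε₁] at this
    · exact ⟨M₁, ε₁, μ₁, hε₁d, ⟨M₂, l ≫ r'', hμ₁⟩, hε₁, hιε.isCokernelOf⟩
  · -- ExactAt ψ₁ ψ₂
    constructor
    · refine ⟨M₁, ε₁, μ₁, hε₁d, ⟨M₂, l ≫ r'', hμ₁⟩, hε₁, ?_⟩
      have := hμ₁.isKernelOf.comp_mono (fun u v h => hμ₂.isKernelOf.cancel h)
      rwa [hε₂μ] at this
    · refine ⟨M₂, l ≫ r'', μ₂, hε₂d, ⟨M₃, ε₃, hμ₂⟩, hε₂μ, ?_⟩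
      have := hμ₁.isCokernelOf.epi_comp (fun u v h => hε₁d.cancel h)
      rwa [hε₁] at this
  · -- ExactAt ψ₂ δ
    constructor
    · refine ⟨M₂, l ≫ r'', μ₂, hε₂d, ⟨M₃, ε₃, hμ₂⟩, hε₂μ, ?_⟩
      have := hμ₂.isKernelOf.comp_mono (fun u v h => hμ₃.isKernelOf.cancel h)
      rwa [hε₃] at this
    · refine ⟨M₃, ε₃, μ₃, hε₃d, ⟨M₄, ε₄, hμ₃⟩, hε₃, ?_⟩
      have := hμ₂.isCokernelOf.epi_comp (fun u v h => hε₂d.cancel h)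
      rwa [hε₂μ] at this
  · -- ExactAt δ ψ₁'
    constructor
    · refine ⟨M₃, ε₃, μ₃, hε₃d, ⟨M₄, ε₄, hμ₃⟩, hε₃, ?_⟩
      have := hμ₃.isKernelOf.comp_mono (fun u v h => hμ₄.isKernelOf.cancel h)
      rwa [hε₄] at this
    · refine ⟨M₄, ε₄, μ₄, hε₄d, ⟨M₅, ε₅, hμ₄⟩, hε₄, ?_⟩
      have := hμ₃.isCokernelOf.epi_comp (fun u v h => hε₃d.cancel h)
      rwa [hε₃] at this
  · -- ExactAt ψ₁' ψ₂'
    constructor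
    · refine ⟨M₄, ε₄, μ₄, hε₄d, ⟨M₅, ε₅, hμ₄⟩, hε₄, ?_⟩
      have := hμ₄.isKernelOf.comp_mono (fun u v h => hμ₅.isKernelOf.cancel h)
      rwa [hε₅] at this
    · refine ⟨M₅, ε₅, μ₅, hε₅d, ⟨Cφ, π, hμ₅⟩, hε₅, ?_⟩
      have := hμ₄.isCokernelOf.epi_comp (fun u v h => hε₄d.cancel h)
      rwa [hε₄] at this
  · -- ExactAt ψ₂' π
    constructor
    · exact ⟨M₅, ε₅, μ₅, hε₅d, ⟨Cφ, π, hμ₅⟩, hε₅, hμ₅.isKernelOf⟩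
    · refine ⟨Cφ, π, 𝟙 Cφ, hπd, ConflationStruct.isInflation_id hDE hR3p Cφ,
        Category.comp_id π, ?_⟩
      have := hμ₅.isCokernelOf.epi_comp (fun u v h => hε₅d.cancel h)
      rwa [hε₅] at this
end

section
/- Let E be a deflation-exact category satisfying axiom (R0*). The following are equivalent: (1) E satisfies axiom (R3+); (2) whenever (0, g) : X ⊕ Y → Z is a deflation, g : Y → Z is a deflation; (3) a morphism g : Y → Z is a deflation if and only if there exists a deflation f : X ↠ Y such that g∘f is a deflation; (4) deflations are closed under retracts: for any commutative square with top row a deflation g : Y ↠ Z, bottom row g' : Y' → Z', and vertical morphisms Y → Y' and Z → Z' which are retractions, g' is a deflation; (5) deflations are closed under direct summands: for any morphisms g : Y → Z and g' : Y' → Z', if g ⊕ g' : Y ⊕ Y' → Z ⊕ Z' is a deflation, then g and g' are deflations. -/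
open CategoryTheory CategoryTheory.Limits ZeroObject

attribute [local instance] CategoryTheory.Limits.hasBinaryBiproducts_of_finite_biproducts

universe v u

section Aux

variable {C : Type u} [Category.{v} C] [Preadditive C] [HasZeroObject C]
  [HasFiniteBiproducts C] (S : ConflationStruct C)

lemma defl_transport {Y Z Y' Z' : C} {g : Y ⟶ Z} {g' : Y' ⟶ Z'}
    (eY : Y ≅ Y') (eZ : Z ≅ Z') (h : g ≫ eZ.hom = eY.hom ≫ g')
    (hg : S.IsDeflation g) : S.IsDeflation g' := by
  obtain ⟨X, f, hf⟩ := hg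
  exact ⟨X, f ≫ eY.hom, S.iso_closed (Iso.refl X) eY eZ (by simp) h hf⟩

lemma defl_pullback (hDE : S.IsDeflationExact) {Y Z : C} {g : Y ⟶ Z} (hg : S.IsDeflation g)
    {W P : C} {h : W ⟶ Z} {p₁ : P ⟶ Y} {p₂ : P ⟶ W}
    (pb : IsPullback p₁ p₂ g h) : S.IsDeflation p₂ := by
  obtain ⟨Q, q₁, q₂, pb', hq₂⟩ := hDE.R2 hg h
  exact defl_transport S (pb'.isoIsPullback _ _ pb) (Iso.refl W) (by simp) hq₂

lemma defl_id (hDE : S.IsDeflationExact) (A : C) : S.IsDeflation (𝟙 A) :=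
  defl_pullback S hDE hDE.R0 (IsPullback.of_id_snd (f := (0 : A ⟶ (0 : C))))

lemma defl_iso (hDE : S.IsDeflationExact) {Y Z : C} (g : Y ⟶ Z) [IsIso g] :
    S.IsDeflation g :=
  defl_transport S (Iso.refl Y) (asIso g) (hg := defl_id S hDE Y) (h := by simp)

lemma defl_fst (hDE : S.IsDeflationExact) (hR0s : S.AxiomR0star) (X Y : C) :
    S.IsDeflation (biprod.fst : X ⊞ Y ⟶ X) :=
  defl_pullback S hDE (hR0s Y) ((IsPullback.of_has_biproduct X Y).flip)

lemma defl_snd (hDE : S.IsDeflationExact) (hR0s : S.AxiomR0star) (X Y : C) :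
    S.IsDeflation (biprod.snd : X ⊞ Y ⟶ Y) :=
  defl_pullback S hDE (hR0s X) (IsPullback.of_has_biproduct X Y)

lemma isPullback_map_id {C : Type u} [Category.{v} C] [Preadditive C] [HasZeroObject C]
    [HasFiniteBiproducts C] {X Z : C} (Y : C) (p : X ⟶ Z) :
    IsPullback (biprod.fst : X ⊞ Y ⟶ X) (biprod.map p (𝟙 Y)) p (biprod.fst : Z ⊞ Y ⟶ Z) := by
  have w : (biprod.fst : X ⊞ Y ⟶ X) ≫ p = biprod.map p (𝟙 Y) ≫ biprod.fst := by simp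
  refine IsPullback.of_isLimit (PullbackCone.IsLimit.mk w
    (fun s => biprod.lift s.fst (s.snd ≫ biprod.snd)) ?_ ?_ ?_)
  · intro s; simp
  · intro s
    apply biprod.hom_ext
    · simpa using s.condition
    · simp
  · intro s m h1 h2
    apply biprod.hom_ext
    · simpa using h1
    · have := h2 =≫ biprod.snd
      simpa using this

lemma defl_desc_left (hDE : S.IsDeflationExact) (hR0s : S.AxiomR0star)
    {X Z : C} (Y : C) {p : X ⟶ Z} (hp : S.IsDeflation p) (q : Y ⟶ Z) :
    S.IsDeflation (biprod.desc p q) := by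
  have h1 : S.IsDeflation (biprod.map p (𝟙 Y)) :=
    defl_pullback S hDE hp (isPullback_map_id Y p)
  haveI hψ : IsIso (biprod.lift (biprod.desc (𝟙 Z) q) (biprod.snd : Z ⊞ Y ⟶ Y)) := by
    refine ⟨biprod.lift (biprod.desc (𝟙 Z) (-q)) biprod.snd, ?_, ?_⟩ <;>
      apply biprod.hom_ext <;> apply biprod.hom_ext' <;> simp
  have h2 : S.IsDeflation (biprod.desc (𝟙 Z) q) := by
    have := hDE.R1 (defl_iso S hDE
      (biprod.lift (biprod.desc (𝟙 Z) q) (biprod.snd : Z ⊞ Y ⟶ Y)))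
      (defl_fst S hDE hR0s Z Y)
    simpa using this
  have h3 := hDE.R1 h1 h2
  have heq : biprod.map p (𝟙 Y) ≫ biprod.desc (𝟙 Z) q = biprod.desc p q := by
    apply biprod.hom_ext' <;> simp
  rwa [heq] at h3

lemma defl_desc_right (hDE : S.IsDeflationExact) (hR0s : S.AxiomR0star)
    {Y Z : C} (X : C) (p : X ⟶ Z) {q : Y ⟶ Z} (hq : S.IsDeflation q) :
    S.IsDeflation (biprod.desc p q) := by
  have h1 : S.IsDeflation (biprod.desc q p) := defl_desc_left S hDE hR0s X hq p
  refine defl_transport S (biprod.braiding Y X) (Iso.refl Z) ?_ h1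
  apply biprod.hom_ext' <;> simp

end Aux

/-- Let `E` be a deflation-exact category satisfying axiom (R0*).  The following
are equivalent: (1) axiom (R3+); (2) if `(0, g) : X ⊕ Y ⟶ Z` is a deflation, then
`g` is a deflation; (3) `g` is a deflation iff there is a deflation `f : X ↠ Y`
with `f ≫ g` a deflation; (4) deflations are closed under retracts; (5) deflations
are closed under direct summands. -/
theorem R3plus_equivalent_formulations {C : Type u} [Category.{v} C] [Preadditive C]
    [HasZeroObject C] [HasFiniteBiproducts C] (S : ConflationStruct C)
    (hDE : S.IsDeflationExact) (hR0s : S.AxiomR0star) :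
    (S.AxiomR3plus ↔ ∀ (X Y Z : C) (g : Y ⟶ Z),
      S.IsDeflation (biprod.desc (0 : X ⟶ Z) g) → S.IsDeflation g) ∧
    (S.AxiomR3plus ↔ ∀ (Y Z : C) (g : Y ⟶ Z),
      (S.IsDeflation g ↔
        ∃ (X : C) (f : X ⟶ Y), S.IsDeflation f ∧ S.IsDeflation (f ≫ g))) ∧
    (S.AxiomR3plus ↔ ∀ (Y Z Y' Z' : C) (g : Y ⟶ Z) (g' : Y' ⟶ Z')
      (v : Y ⟶ Y') (w : Z ⟶ Z'),
      (∃ v' : Y' ⟶ Y, v' ≫ v = 𝟙 Y') → (∃ w' : Z' ⟶ Z, w' ≫ w = 𝟙 Z') →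
      g ≫ w = v ≫ g' → S.IsDeflation g → S.IsDeflation g') ∧
    (S.AxiomR3plus ↔ ∀ (Y Z Y' Z' : C) (g : Y ⟶ Z) (g' : Y' ⟶ Z'),
      S.IsDeflation (biprod.map g g') → S.IsDeflation g ∧ S.IsDeflation g') := by
  have key21 : (∀ (X Y Z : C) (g : Y ⟶ Z),
      S.IsDeflation (biprod.desc (0 : X ⟶ Z) g) → S.IsDeflation g) → S.AxiomR3plus := by
    intro h2 X Y Z f g hfg
    have hdesc : S.IsDeflation (biprod.desc (f ≫ g) g) :=
      defl_desc_left S hDE hR0s Y hfg g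
    haveI hφ : IsIso (biprod.desc (biprod.lift (𝟙 X) (-f)) (biprod.inr : Y ⟶ X ⊞ Y)) := by
      refine ⟨biprod.desc (biprod.lift (𝟙 X) f) biprod.inr, ?_, ?_⟩ <;>
        apply biprod.hom_ext' <;> apply biprod.hom_ext <;> simp
    have hcomp := hDE.R1 (defl_iso S hDE
      (biprod.desc (biprod.lift (𝟙 X) (-f)) (biprod.inr : Y ⟶ X ⊞ Y))) hdesc
    have heq : biprod.desc (biprod.lift (𝟙 X) (-f)) (biprod.inr : Y ⟶ X ⊞ Y) ≫
        biprod.desc (f ≫ g) g = biprod.desc (0 : X ⟶ Z) g := by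
      apply biprod.hom_ext' <;> simp
    rw [heq] at hcomp
    exact h2 X Y Z g hcomp
  have key12 : S.AxiomR3plus → ∀ (X Y Z : C) (g : Y ⟶ Z),
      S.IsDeflation (biprod.desc (0 : X ⟶ Z) g) → S.IsDeflation g := by
    intro h1 X Y Z g hd
    have heq : biprod.desc (0 : X ⟶ Z) g = biprod.snd ≫ g := by
      apply biprod.hom_ext' <;> simp
    rw [heq] at hd
    exact h1 biprod.snd g hd
  refine ⟨⟨key12, key21⟩, ?_, ?_, ?_⟩
  · constructor
    · intro h1 Y Z g
      constructor
      · intro hg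
        exact ⟨Y, 𝟙 Y, defl_id S hDE Y, by simpa using hg⟩
      · rintro ⟨X, f, _, hfg⟩
        exact h1 f g hfg
    · intro h3
      refine key21 ?_
      intro X Y Z g hd
      refine (h3 Y Z g).2 ⟨X ⊞ Y, biprod.desc (0 : X ⟶ Y) (𝟙 Y),
        defl_desc_right S hDE hR0s X 0 (defl_id S hDE Y), ?_⟩
      have heq : biprod.desc (0 : X ⟶ Y) (𝟙 Y) ≫ g = biprod.desc (0 : X ⟶ Z) g := by
        apply biprod.hom_ext' <;> simp
      rwa [heq]
  · constructor
    · rintro h1 Y Z Y' Z' g g' v w ⟨v', hv⟩ ⟨w', hw⟩ hsq hg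
      have hwdef : S.IsDeflation w := by
        refine h1 w' w ?_
        rw [hw]; exact defl_id S hDE Z'
      have : S.IsDeflation (v ≫ g') := by rw [← hsq]; exact hDE.R1 hg hwdef
      exact h1 v g' this
    · intro h4
      refine key21 ?_
      intro X Y Z g hd
      refine h4 (X ⊞ Y) Z Y Z (biprod.desc (0 : X ⟶ Z) g) g biprod.snd (𝟙 Z)
        ⟨biprod.inr, by simp⟩ ⟨𝟙 Z, by simp⟩ ?_ hd
      apply biprod.hom_ext' <;> simp
  · constructor
    · intro h1 Y Z Y' Z' g g' hd
      constructor
      · refine h1 (biprod.fst : Y ⊞ Y' ⟶ Y) g ?_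
        have := hDE.R1 hd (defl_fst S hDE hR0s Z Z')
        rwa [biprod.map_fst] at this
      · refine h1 (biprod.snd : Y ⊞ Y' ⟶ Y') g' ?_
        have := hDE.R1 hd (defl_snd S hDE hR0s Z Z')
        rwa [biprod.map_snd] at this
    · intro h5
      refine key21 ?_
      intro X Y Z g hd
      haveI : IsIso (biprod.inr : Z ⟶ (0 : C) ⊞ Z) := by
        refine ⟨biprod.snd, by simp, ?_⟩
        apply biprod.hom_ext
        · apply (isZero_zero C).eq_of_tgt
        · simp
      have hcomp := hDE.R1 hd (defl_iso S hDE (biprod.inr : Z ⟶ (0 : C) ⊞ Z))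
      have heq : biprod.desc (0 : X ⟶ Z) g ≫ (biprod.inr : Z ⟶ (0 : C) ⊞ Z) =
          biprod.map (0 : X ⟶ (0 : C)) g := by
        apply biprod.hom_ext' <;> apply biprod.hom_ext <;> simp
      rw [heq] at hcomp
      exact (h5 X (0 : C) Y Z (0 : X ⟶ (0 : C)) g hcomp).2
end
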